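/- arXiv:2510.23490 — 3 statements merged into one kernel-verified Lean document; each statement's English description precedes it below -/
import Mathlib

section
/- If a candidate structure D is imperfect, then there exist a word w ∈ 𝔄*, a vertex s with a →^w s, and an index 1 ≤ i ≤ k, together with vertices y ≠ y' such that s →^{l_i} y and s →^{r_i} y'. -/
/-
If `s →^{l} t` fails to be equivalent to `s →^{r} t`, one of the two paths reaches `t` and the
other does not. By (p2) and (p3) every vertex reachable from `a` has an outgoing edge of each
label, so the other word is still readable from `s`, necessarily ending at a vertex `≠ t`.
-/

/-- The smallest equivalence relation on words over `α` generated by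
`w ++ lᵢ ++ v ≃ w ++ rᵢ ++ v` for pairs `(lᵢ, rᵢ) ∈ P`. -/
def ThueEq {α : Type} (P : List (List α × List α)) : List α → List α → Prop :=
  Relation.EqvGen (fun u v => ∃ x y p, p ∈ P ∧ u = x ++ p.1 ++ y ∧ v = x ++ p.2 ++ y)

/-- `LPath E w s t`: there is a path from `s` to `t` whose edges are labeled by the word `w`. -/
def LPath {α V : Type} (E : α → V → V → Prop) : List α → V → V → Prop
  | [] => fun s t => s = t
  | R :: w => fun s t => ∃ u, E R s u ∧ LPath E w u t

namespace LPath

variable {α V : Type} {E : α → V → V → Prop}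

theorem forall_exists_edge_target (hE : ∀ s t R S, E R s t → ∃ u, E S t u) :
    ∀ {w : List α} {s t : V}, (∀ S, ∃ u, E S s u) → LPath E w s t → ∀ S, ∃ u, E S t u
  | [], _, _, hs, rfl => hs
  | R :: _, s, _, _, ⟨u, hsu, hut⟩ =>
      forall_exists_edge_target hE (fun S => hE s u R S hsu) hut

theorem exists_of_forall_exists_edge (hE : ∀ s t R S, E R s t → ∃ u, E S t u) :
    ∀ (w : List α) {s : V}, (∀ S, ∃ u, E S s u) → ∃ t, LPath E w s t
  | [], s, _ => ⟨s, rfl⟩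
  | R :: w, s, hs => by
      obtain ⟨u, hsu⟩ := hs R
      obtain ⟨t, hut⟩ := exists_of_forall_exists_edge hE w (fun S => hE s u R S hsu)
      exact ⟨t, u, hsu, hut⟩

end LPath

theorem exists_ne_of_not_iff {V : Type} {Q Q' : V → Prop} {t : V} (h : ¬(Q t ↔ Q' t))
    (hQ : ∃ y, Q y) (hQ' : ∃ y', Q' y') : ∃ y y', y ≠ y' ∧ Q y ∧ Q' y' := by
  by_cases ht : Q t
  · obtain ⟨y', hy'⟩ := hQ'
    exact ⟨t, y', fun he => h (iff_of_true ht (he ▸ hy')), ht, hy'⟩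
  · obtain ⟨y, hy⟩ := hQ
    have hQ't : Q' t := by_contra fun hQ't => h (iff_of_false ht hQ't)
    exact ⟨y, t, fun he => ht (he ▸ hy), hy, hQ't⟩

theorem imperfect_detected_general {α V : Type}
    (P : List (List α × List α))
    (E : α → V → V → Prop) (Ap : V → Prop) (a : V)
    (p1 : Ap a)
    (p2 : ∀ s, Ap s → ∀ S, ∃ t, E S s t)
    (p3 : ∀ s t R S, E R s t → ∃ u, E S t u)
    (himp : ¬ ∀ w s t, LPath E w a s → ∀ p ∈ P, (LPath E p.1 s t ↔ LPath E p.2 s t)) :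
    ∃ (w : List α) (s : V), LPath E w a s ∧
      ∃ p ∈ P, ∃ y y', y ≠ y' ∧ LPath E p.1 s y ∧ LPath E p.2 s y' := by
  simp only [not_forall, exists_prop] at himp
  obtain ⟨w, s, t, has, p, hp, hiff⟩ := himp
  have hs : ∀ S, ∃ u, E S s u := LPath.forall_exists_edge_target p3 (p2 a p1) has
  exact ⟨w, s, has, p, hp, exists_ne_of_not_iff hiff
    (LPath.exists_of_forall_exists_edge p3 p.1 hs) (LPath.exists_of_forall_exists_edge p3 p.2 hs)⟩

theorem imperfect_detected {α V : Type} [Fintype α]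
    (P : List (List α × List α))
    (E : α → V → V → Prop) (Ap : V → Prop) (a : V)
    (p1 : Ap a)
    (p2 : ∀ s, Ap s → ∀ S, ∃ t, E S s t)
    (p3 : ∀ s t R S, E R s t → ∃ u, E S t u)
    (himp : ¬ ∀ w s t, LPath E w a s → ∀ p ∈ P, (LPath E p.1 s t ↔ LPath E p.2 s t)) :
    ∃ (w : List α) (s : V), LPath E w a s ∧
      ∃ p ∈ P, ∃ y y', y ≠ y' ∧ LPath E p.1 s y ∧ LPath E p.2 s y' :=
  imperfect_detected_general P E Ap a p1 p2 p3 himp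
end

section
/- In the canonical structure 𝔻, no query γ_i is satisfied: there is no vertex s of 𝔻, no index 1 ≤ i ≤ k, and no pair of distinct vertices y ≠ y' such that s →^{l_i} y and s →^{r_i} y'. -/
def thueSetoid {α : Type} (P : List (List α × List α)) : Setoid (List α) :=
  ⟨ThueEq P, Relation.EqvGen.is_equivalence _⟩

/-- Vertices of the canonical structure 𝔻 : equivalence classes of words. -/
def DVert {α : Type} (P : List (List α × List α)) : Type := Quotient (thueSetoid P)

/-- Edges of 𝔻 : `R([w],[v])` iff `wR ≃_Π v`. -/
def DEdge {α : Type} (P : List (List α × List α)) (R : α) (s t : DVert P) : Prop :=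
  ∃ w v, s = Quotient.mk (thueSetoid P) w ∧ t = Quotient.mk (thueSetoid P) v ∧
    ThueEq P (w ++ [R]) v

/-- The unary predicate of 𝔻 : `A([w])` iff `w ≃_Π ε`. -/
def DA {α : Type} (P : List (List α × List α)) (s : DVert P) : Prop :=
  ∃ w, s = Quotient.mk (thueSetoid P) w ∧ ThueEq P w []

/-! Paths in 𝔻 are deterministic: a path labeled `u` from `[w]` must end at `[w u]`. Hence the
`lᵢ`- and `rᵢ`-paths from `[w]` end at `[w lᵢ]` and `[w rᵢ]`, which coincide since
`w lᵢ ≃_Π w rᵢ`. -/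

section CanonicalStructure

variable {α : Type} (P : List (List α × List α))

theorem thueEq_append_right {u v : List α} (h : ThueEq P u v) (z : List α) :
    ThueEq P (u ++ z) (v ++ z) := by
  induction h with
  | rel a b hab =>
      obtain ⟨x, y, p, hp, rfl, rfl⟩ := hab
      exact Relation.EqvGen.rel _ _ ⟨x, y ++ z, p, hp, by simp, by simp⟩
  | refl a => exact Relation.EqvGen.refl _
  | symm a b _ ih => exact Relation.EqvGen.symm _ _ ih
  | trans a b c _ _ ih1 ih2 => exact Relation.EqvGen.trans _ _ _ ih1 ih2

theorem thueEq_append_of_mem {p : List α × List α} (hp : p ∈ P) (w : List α) :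
    ThueEq P (w ++ p.1) (w ++ p.2) :=
  Relation.EqvGen.rel _ _ ⟨w, [], p, hp, by simp, by simp⟩

theorem dEdge_mk {R : α} {w : List α} {t : DVert P}
    (h : DEdge P R (Quotient.mk (thueSetoid P) w) t) :
    t = Quotient.mk (thueSetoid P) (w ++ [R]) := by
  obtain ⟨w', v, hw, rfl, hv⟩ := h
  have hww' : ThueEq P w w' := Quotient.exact hw
  exact Quotient.sound <|
    Relation.EqvGen.symm _ _ (Relation.EqvGen.trans _ _ _ (thueEq_append_right P hww' [R]) hv)

theorem lPath_dEdge_mk {u w : List α} {t : DVert P}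
    (h : LPath (DEdge P) u (Quotient.mk (thueSetoid P) w) t) :
    t = Quotient.mk (thueSetoid P) (w ++ u) := by
  induction u generalizing w with
  | nil => simpa [LPath] using h.symm
  | cons R u ih =>
      obtain ⟨m, hm, hpath⟩ := h
      rw [dEdge_mk P hm] at hpath
      simpa using ih hpath

end CanonicalStructure

theorem canonical_no_gamma_general {α : Type} (P : List (List α × List α)) :
    ¬ ∃ (s : DVert P), ∃ p ∈ P, ∃ y y' : DVert P,
      y ≠ y' ∧ LPath (DEdge P) p.1 s y ∧ LPath (DEdge P) p.2 s y' := by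
  rintro ⟨s, p, hp, y, y', hne, hy, hy'⟩
  obtain ⟨w, rfl⟩ := Quotient.exists_rep s
  rw [lPath_dEdge_mk P hy, lPath_dEdge_mk P hy'] at hne
  exact hne (Quotient.sound (thueEq_append_of_mem P hp w))

theorem canonical_no_gamma {α : Type} [Fintype α] (P : List (List α × List α)) :
    ¬ ∃ (s : DVert P), ∃ p ∈ P, ∃ y y' : DVert P,
      y ≠ y' ∧ LPath (DEdge P) p.1 s y ∧ LPath (DEdge P) p.2 s y' :=
  canonical_no_gamma_general P
end

section
/- If every candidate structure D satisfies the disjunction Ψ = Γ^≠ ∨ γ_♢^∃ — where Γ^≠ asserts the existence of a vertex x and distinct vertices y ≠ y' with x →^{l_i} y and x →^{r_i} y' for some i, and γ_♢^∃ asserts the existence of vertices x, y with A(x), x →^l y, x →^r y — then l ≃_Π r. Conversely, if l ≃_Π r then every candidate structure satisfies Ψ. -/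
variable {α V : Type}

def ThueStep (P : List (List α × List α)) (u v : List α) : Prop :=
  ∃ x y p, p ∈ P ∧ u = x ++ p.1 ++ y ∧ v = x ++ p.2 ++ y

theorem ThueStep.append_right {P : List (List α × List α)} {u v : List α}
    (h : ThueStep P u v) (w : List α) : ThueStep P (u ++ w) (v ++ w) := by
  obtain ⟨x, y, p, hp, rfl, rfl⟩ := h
  exact ⟨x, y ++ w, p, hp, by simp, by simp⟩

theorem LPath.append_iff {E : α → V → V → Prop} {u v : List α} {s t : V} :
    LPath E (u ++ v) s t ↔ ∃ m, LPath E u s m ∧ LPath E v m t := by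
  induction u generalizing s with
  | nil => exact ⟨fun h => ⟨s, rfl, h⟩, by rintro ⟨m, rfl, h⟩; exact h⟩
  | cons R u ih => simp only [List.cons_append, LPath, ih]; grind

section Candidate

variable {E : α → V → V → Prop} {Ap : V → Prop}

/-- The vertices at which the candidate axioms force an outgoing edge of every label. -/
def IsActive (Ap : V → Prop) (E : α → V → V → Prop) (s : V) : Prop :=
  Ap s ∨ ∃ R u, E R u s

theorem LPath.isActive {w : List α} {s t : V} (h : LPath E w s t) (hs : IsActive Ap E s) :
    IsActive Ap E t := by
  induction w generalizing s with
  | nil => exact h ▸ hs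
  | cons R w ih =>
    obtain ⟨u, hsu, hut⟩ := h
    exact ih hut (Or.inr ⟨R, s, hsu⟩)

theorem exists_lPath_of_isActive (hA : ∀ s, Ap s → ∀ S, ∃ t, E S s t)
    (hE : ∀ s t R S, E R s t → ∃ u, E S t u) (w : List α) {s : V} (hs : IsActive Ap E s) :
    ∃ t, LPath E w s t := by
  induction w generalizing s with
  | nil => exact ⟨s, rfl⟩
  | cons R w ih =>
    obtain ⟨u, hsu⟩ : ∃ u, E R s u := by
      rcases hs with hs | ⟨R', u', hu's⟩
      · exact hA s hs R
      · exact hE u' s R' R hu's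
    obtain ⟨t, hut⟩ := ih (Or.inr ⟨R, s, hsu⟩)
    exact ⟨t, u, hsu, hut⟩

variable {P : List (List α × List α)}

theorem lPath_fst_iff_snd (hA : ∀ s, Ap s → ∀ S, ∃ t, E S s t)
    (hE : ∀ s t R S, E R s t → ∃ u, E S t u)
    (hdet : ∀ x, ∀ p ∈ P, ∀ y y', LPath E p.1 x y → LPath E p.2 x y' → y = y')
    {p : List α × List α} (hp : p ∈ P) {m n : V}
    (hm : IsActive Ap E m) : LPath E p.1 m n ↔ LPath E p.2 m n := by
  constructor
  · intro h1
    obtain ⟨n', h2⟩ := exists_lPath_of_isActive hA hE p.2 hm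
    exact hdet m p hp n n' h1 h2 ▸ h2
  · intro h2
    obtain ⟨n', h1⟩ := exists_lPath_of_isActive hA hE p.1 hm
    exact (hdet m p hp n' n h1 h2).symm ▸ h1

theorem lPath_iff_of_thueEq (hA : ∀ s, Ap s → ∀ S, ∃ t, E S s t)
    (hE : ∀ s t R S, E R s t → ∃ u, E S t u)
    (hdet : ∀ x, ∀ p ∈ P, ∀ y y', LPath E p.1 x y → LPath E p.2 x y' → y = y')
    {u v : List α} (huv : ThueEq P u v) {s t : V}
    (hs : IsActive Ap E s) : LPath E u s t ↔ LPath E v s t := by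
  induction huv generalizing s t with
  | rel _ _ h =>
    obtain ⟨x, y, p, hp, rfl, rfl⟩ := h
    simp only [LPath.append_iff]
    constructor <;> rintro ⟨n, ⟨m, hsm, hmn⟩, hnt⟩
    · exact ⟨n, ⟨m, hsm, (lPath_fst_iff_snd hA hE hdet hp (hsm.isActive hs)).1 hmn⟩, hnt⟩
    · exact ⟨n, ⟨m, hsm, (lPath_fst_iff_snd hA hE hdet hp (hsm.isActive hs)).2 hmn⟩, hnt⟩
  | refl => rfl
  | symm _ _ _ ih => exact (ih hs).symm
  | trans _ _ _ _ _ ih₁ ih₂ => exact (ih₁ hs).trans (ih₂ hs)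

end Candidate

/-- The edges of the canonical structure `𝔻`, whose vertices are the Thue classes. -/
def canonEdge (P : List (List α × List α)) (S : α) (q q' : Quot (ThueStep P)) : Prop :=
  q' = Quot.map (· ++ [S]) (fun _ _ h => h.append_right [S]) q

theorem lPath_canonEdge_iff {P : List (List α × List α)} (w u : List α) (t : Quot (ThueStep P)) :
    LPath (canonEdge P) w (Quot.mk _ u) t ↔ t = Quot.mk _ (u ++ w) := by
  induction w generalizing u with
  | nil => simp only [LPath, List.append_nil]; exact eq_comm
  | cons R w ih =>
    simp [LPath, canonEdge, Quot.map, ih]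

theorem entailment_iff_positive_general {α : Type}
    (P : List (List α × List α)) (l r : List α) :
    (∀ (V : Type) (E : α → V → V → Prop) (Ap : V → Prop) (a : V),
        Ap a →
        (∀ s, Ap s → ∀ S, ∃ t, E S s t) →
        (∀ s t R S, E R s t → ∃ u, E S t u) →
        ((∃ x, ∃ p ∈ P, ∃ y y', y ≠ y' ∧ LPath E p.1 x y ∧ LPath E p.2 x y') ∨
         (∃ x y, Ap x ∧ LPath E l x y ∧ LPath E r x y)))
    ↔ ThueEq P l r := by
  constructor
  · intro H
    rcases H (Quot (ThueStep P)) (canonEdge P) (· = Quot.mk _ []) (Quot.mk _ []) rfl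
        (fun _ _ _ => ⟨_, rfl⟩) (fun _ _ _ _ _ => ⟨_, rfl⟩) with
      ⟨x, p, hp, y, y', hne, h₁, h₂⟩ | ⟨x, y, rfl, hl, hr⟩
    · induction x using Quot.ind with | _ u => ?_
      rw [lPath_canonEdge_iff] at h₁ h₂
      have hstep : ThueStep P (u ++ p.1) (u ++ p.2) := ⟨u, [], p, hp, by simp, by simp⟩
      exact absurd (h₁.trans ((Quot.sound hstep).trans h₂.symm)) hne
    · rw [lPath_canonEdge_iff] at hl hr
      exact Quot.eqvGen_exact (hl.symm.trans hr)
  · intro hT V E Ap a ha hA hE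
    refine or_iff_not_imp_left.2 fun hΓ => ?_
    have hdet : ∀ x, ∀ p ∈ P, ∀ y y', LPath E p.1 x y → LPath E p.2 x y' → y = y' :=
      fun x p hp y y' h₁ h₂ => by_contra fun hne => hΓ ⟨x, p, hp, y, y', hne, h₁, h₂⟩
    obtain ⟨t, hl⟩ := exists_lPath_of_isActive hA hE l (Or.inl ha)
    exact ⟨a, t, ha, hl, (lPath_iff_of_thueEq hA hE hdet hT (Or.inl ha)).1 hl⟩

theorem entailment_iff_positive {α : Type} [Fintype α]
    (P : List (List α × List α)) (l r : List α)
    (hl : l ≠ []) (hr : r ≠ []) (hP : ∀ p ∈ P, p.1 ≠ [] ∧ p.2 ≠ []) :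
    (∀ (V : Type) (E : α → V → V → Prop) (Ap : V → Prop) (a : V),
        Ap a →
        (∀ s, Ap s → ∀ S, ∃ t, E S s t) →
        (∀ s t R S, E R s t → ∃ u, E S t u) →
        ((∃ x, ∃ p ∈ P, ∃ y y', y ≠ y' ∧ LPath E p.1 x y ∧ LPath E p.2 x y') ∨
         (∃ x y, Ap x ∧ LPath E l x y ∧ LPath E r x y)))
    ↔ ThueEq P l r :=
  entailment_iff_positive_general P l r
end
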